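/- arXiv:math/0302200 — 5 statements merged into one kernel-verified Lean document; each statement's English description precedes it below -/
import Mathlib

section
/- Let Ω, Ψ, φ : ℝ × ℝ² → ℂ be smooth functions of (t,x,y). Suppose Ω satisfies the 2D Euler equation in vorticity form, ∂ₜΩ + {Ψ, Ω} = 0, and φ satisfies the auxiliary equation ∂ₜφ + {Ψ, φ} = 0. Then for every complex constant λ, the function ψ := {Ω, φ} − λφ also satisfies ∂ₜψ + {Ψ, ψ} = 0. (This is the compatibility of the Lax pair L φ = {Ω, φ} = λφ, ∂ₜφ + A φ = 0 with A φ = {Ψ, φ}, for the 2D Euler equation.) -/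
/-- Partial derivative in time of a function of (t,x,y). -/
noncomputable def pt (f : ℝ → ℝ → ℝ → ℂ) (t x y : ℝ) : ℂ :=
  deriv (fun s => f s x y) t

/-- Partial derivative in x of a function of (t,x,y). -/
noncomputable def px (f : ℝ → ℝ → ℝ → ℂ) (t x y : ℝ) : ℂ :=
  deriv (fun a => f t a y) x

/-- Partial derivative in y of a function of (t,x,y). -/
noncomputable def py (f : ℝ → ℝ → ℝ → ℂ) (t x y : ℝ) : ℂ :=
  deriv (fun b => f t x b) y

/-- The bracket {f,g} = (∂ₓf)(∂_y g) − (∂_y f)(∂ₓ g) (spatial variables only). -/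
noncomputable def bracket (f g : ℝ → ℝ → ℝ → ℂ) (t x y : ℝ) : ℂ :=
  px f t x y * py g t x y - py f t x y * px g t x y

noncomputable section LaxAux

abbrev E3 : Type := ℝ × ℝ × ℝ

def vt : E3 := (1, 0, 0)
def vx : E3 := (0, 1, 0)
def vy : E3 := (0, 0, 1)

/-- uncurry -/
abbrev UU (f : ℝ → ℝ → ℝ → ℂ) : E3 → ℂ := fun q => f q.1 q.2.1 q.2.2

/-- directional derivative -/
def pd (v : E3) (F : E3 → ℂ) : E3 → ℂ := fun q => fderiv ℝ F q v

lemma smooth_pd {F : E3 → ℂ} (hF : ContDiff ℝ (⊤ : ℕ∞) F) (v : E3) : ContDiff ℝ (⊤ : ℕ∞) (pd v F) :=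
  (hF.fderiv_right (by simp)).clm_apply contDiff_const

lemma pd_comm {F : E3 → ℂ} (hF : ContDiff ℝ (⊤ : ℕ∞) F) (u v : E3) :
    pd u (pd v F) = pd v (pd u F) := by
  funext q
  have hsym : IsSymmSndFDerivAt ℝ F q :=
    hF.contDiffAt.isSymmSndFDerivAt (by rw [minSmoothness_of_isRCLikeNormedField]; exact WithTop.coe_le_coe.mpr le_top)
  have hd : Differentiable ℝ (fderiv ℝ F) :=
    (hF.fderiv_right (m := (⊤ : ℕ∞)) (by simp)).differentiable (by simp)
  have key : ∀ w z : E3, pd w (pd z F) q = fderiv ℝ (fderiv ℝ F) q w z := by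
    intro w z
    show fderiv ℝ (fun p => fderiv ℝ F p z) q w = _
    rw [fderiv_clm_apply (hd q) (differentiableAt_const z)]
    simp
  rw [key, key, hsym u v]

lemma slice_t {F : E3 → ℂ} {t x y : ℝ} (h : DifferentiableAt ℝ F (t, x, y)) :
    deriv (fun s => F (s, x, y)) t = pd vt F (t, x, y) := by
  have hline : HasDerivAt (fun s : ℝ => ((s, x, y) : E3)) vt t :=
    HasDerivAt.prodMk (hasDerivAt_id t) (hasDerivAt_const t ((x, y) : ℝ × ℝ))
  exact (h.hasFDerivAt.comp_hasDerivAt t hline).deriv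

lemma slice_x {F : E3 → ℂ} {t x y : ℝ} (h : DifferentiableAt ℝ F (t, x, y)) :
    deriv (fun a => F (t, a, y)) x = pd vx F (t, x, y) := by
  have hline : HasDerivAt (fun a : ℝ => ((t, a, y) : E3)) vx x :=
    HasDerivAt.prodMk (hasDerivAt_const x t) (HasDerivAt.prodMk (hasDerivAt_id x) (hasDerivAt_const x y))
  exact (h.hasFDerivAt.comp_hasDerivAt x hline).deriv

lemma slice_y {F : E3 → ℂ} {t x y : ℝ} (h : DifferentiableAt ℝ F (t, x, y)) :
    deriv (fun b => F (t, x, b)) y = pd vy F (t, x, y) := by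
  have hline : HasDerivAt (fun b : ℝ => ((t, x, b) : E3)) vy y :=
    HasDerivAt.prodMk (hasDerivAt_const y t) (HasDerivAt.prodMk (hasDerivAt_const y x) (hasDerivAt_id y))
  exact (h.hasFDerivAt.comp_hasDerivAt y hline).deriv

lemma pd_mul {F G : E3 → ℂ} {q : E3} (hF : DifferentiableAt ℝ F q)
    (hG : DifferentiableAt ℝ G q) (v : E3) :
    pd v (fun p => F p * G p) q = pd v F q * G q + F q * pd v G q := by
  show fderiv ℝ (fun p => F p * G p) q v = _
  rw [fderiv_fun_mul hF hG]
  simp [pd, smul_eq_mul]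
  ring

lemma pd_sub {F G : E3 → ℂ} {q : E3} (hF : DifferentiableAt ℝ F q)
    (hG : DifferentiableAt ℝ G q) (v : E3) :
    pd v (fun p => F p - G p) q = pd v F q - pd v G q := by
  show fderiv ℝ (fun p => F p - G p) q v = _
  rw [fderiv_fun_sub hF hG]; rfl

lemma pd_neg {F : E3 → ℂ} {q : E3} (v : E3) :
    pd v (fun p => -F p) q = -pd v F q := by
  show fderiv ℝ (fun p => -F p) q v = _
  rw [fderiv_fun_neg]; rfl

lemma pd_const_mul {G : E3 → ℂ} {q : E3} (hG : DifferentiableAt ℝ G q) (c : ℂ) (v : E3) :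
    pd v (fun p => c * G p) q = c * pd v G q := by
  show fderiv ℝ (fun p => c * G p) q v = _
  rw [fderiv_const_mul hG c]; rfl

lemma pt_eq {f : ℝ → ℝ → ℝ → ℂ} (h : Differentiable ℝ (UU f)) (t x y : ℝ) :
    pt f t x y = pd vt (UU f) (t, x, y) := slice_t (h _)

lemma px_eq {f : ℝ → ℝ → ℝ → ℂ} (h : Differentiable ℝ (UU f)) (t x y : ℝ) :
    px f t x y = pd vx (UU f) (t, x, y) := slice_x (h _)

lemma py_eq {f : ℝ → ℝ → ℝ → ℂ} (h : Differentiable ℝ (UU f)) (t x y : ℝ) :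
    py f t x y = pd vy (UU f) (t, x, y) := slice_y (h _)

lemma bracket_eq {f g : ℝ → ℝ → ℝ → ℂ} (hf : Differentiable ℝ (UU f))
    (hg : Differentiable ℝ (UU g)) (t x y : ℝ) :
    bracket f g t x y
      = pd vx (UU f) (t, x, y) * pd vy (UU g) (t, x, y)
        - pd vy (UU f) (t, x, y) * pd vx (UU g) (t, x, y) := by
  unfold bracket
  rw [px_eq hf, py_eq hg, py_eq hf, px_eq hg]

/-- Expansion of pd of a bracket-type expression with a `- c * G` tail. -/
lemma expandBr {F G : E3 → ℂ} (hF : ContDiff ℝ (⊤ : ℕ∞) F) (hG : ContDiff ℝ (⊤ : ℕ∞) G)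
    (c : ℂ) (v q : E3) :
    pd v (fun p => pd vx F p * pd vy G p - pd vy F p * pd vx G p - c * G p) q
      = pd v (pd vx F) q * pd vy G q + pd vx F q * pd v (pd vy G) q
        - (pd v (pd vy F) q * pd vx G q + pd vy F q * pd v (pd vx G) q)
        - c * pd v G q := by
  have d1 : DifferentiableAt ℝ (fun p => pd vx F p * pd vy G p) q :=
    (((smooth_pd hF vx).mul (smooth_pd hG vy)).differentiable (by simp)) q
  have d2 : DifferentiableAt ℝ (fun p => pd vy F p * pd vx G p) q :=
    (((smooth_pd hF vy).mul (smooth_pd hG vx)).differentiable (by simp)) q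
  have d3 : DifferentiableAt ℝ (fun p => pd vx F p * pd vy G p - pd vy F p * pd vx G p) q :=
    d1.sub d2
  have d4 : DifferentiableAt ℝ (fun p => c * G p) q :=
    ((hG.differentiable (by simp)) q).const_mul c
  rw [pd_sub d3 d4, pd_sub d1 d2,
    pd_mul (((smooth_pd hF vx).differentiable (by simp)) q) (((smooth_pd hG vy).differentiable (by simp)) q),
    pd_mul (((smooth_pd hF vy).differentiable (by simp)) q) (((smooth_pd hG vx).differentiable (by simp)) q),
    pd_const_mul ((hG.differentiable (by simp)) q) c]

/-- Expansion of pd of a negated bracket expression. -/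
lemma expandE {P H : E3 → ℂ} (hP : ContDiff ℝ (⊤ : ℕ∞) P) (hH : ContDiff ℝ (⊤ : ℕ∞) H) (v q : E3) :
    pd v (fun p => -(pd vx P p * pd vy H p - pd vy P p * pd vx H p)) q
      = -(pd v (pd vx P) q * pd vy H q + pd vx P q * pd v (pd vy H) q
          - (pd v (pd vy P) q * pd vx H q + pd vy P q * pd v (pd vx H) q)) := by
  have d1 : DifferentiableAt ℝ (fun p => pd vx P p * pd vy H p) q :=
    (((smooth_pd hP vx).mul (smooth_pd hH vy)).differentiable (by simp)) q
  have d2 : DifferentiableAt ℝ (fun p => pd vy P p * pd vx H p) q :=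
    (((smooth_pd hP vy).mul (smooth_pd hH vx)).differentiable (by simp)) q
  rw [pd_neg, pd_sub d1 d2,
    pd_mul (((smooth_pd hP vx).differentiable (by simp)) q) (((smooth_pd hH vy).differentiable (by simp)) q),
    pd_mul (((smooth_pd hP vy).differentiable (by simp)) q) (((smooth_pd hH vx).differentiable (by simp)) q)]

end LaxAux

/-- Compatibility of the Lax pair of the 2D Euler equation: if
`∂ₜΩ + {Ψ,Ω} = 0` and `∂ₜφ + {Ψ,φ} = 0`, then `ψ := {Ω,φ} − λφ`
satisfies `∂ₜψ + {Ψ,ψ} = 0`. -/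
theorem lax_pair_2d_euler
    (Ω Ψ φ : ℝ → ℝ → ℝ → ℂ)
    (hΩ : ContDiff ℝ (⊤ : ℕ∞) (fun q : ℝ × ℝ × ℝ => Ω q.1 q.2.1 q.2.2))
    (hΨ : ContDiff ℝ (⊤ : ℕ∞) (fun q : ℝ × ℝ × ℝ => Ψ q.1 q.2.1 q.2.2))
    (hφ : ContDiff ℝ (⊤ : ℕ∞) (fun q : ℝ × ℝ × ℝ => φ q.1 q.2.1 q.2.2))
    (heuler : ∀ t x y : ℝ, pt Ω t x y + bracket Ψ Ω t x y = 0)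
    (haux : ∀ t x y : ℝ, pt φ t x y + bracket Ψ φ t x y = 0)
    (lam : ℂ) :
    ∀ t x y : ℝ,
      pt (fun t' x' y' => bracket Ω φ t' x' y' - lam * φ t' x' y') t x y
      + bracket Ψ (fun t' x' y' => bracket Ω φ t' x' y' - lam * φ t' x' y') t x y = 0 := by
  have hF : ContDiff ℝ (⊤ : ℕ∞) (UU Ω) := hΩ
  have hP : ContDiff ℝ (⊤ : ℕ∞) (UU Ψ) := hΨ
  have hG : ContDiff ℝ (⊤ : ℕ∞) (UU φ) := hφ
  have dF : Differentiable ℝ (UU Ω) := hF.differentiable (by simp)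
  have dP : Differentiable ℝ (UU Ψ) := hP.differentiable (by simp)
  have dG : Differentiable ℝ (UU φ) := hG.differentiable (by simp)
  -- Euler equation in pd form
  have hEf : pd vt (UU Ω)
      = fun p => -(pd vx (UU Ψ) p * pd vy (UU Ω) p - pd vy (UU Ψ) p * pd vx (UU Ω) p) := by
    funext p
    obtain ⟨t, x, y⟩ := p
    have h := heuler t x y
    rw [pt_eq dF, bracket_eq dP dF] at h
    linear_combination h
  have hGf : pd vt (UU φ)
      = fun p => -(pd vx (UU Ψ) p * pd vy (UU φ) p - pd vy (UU Ψ) p * pd vx (UU φ) p) := by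
    funext p
    obtain ⟨t, x, y⟩ := p
    have h := haux t x y
    rw [pt_eq dG, bracket_eq dP dG] at h
    linear_combination h
  -- the uncurried ψ
  have hUψ : UU (fun t' x' y' => bracket Ω φ t' x' y' - lam * φ t' x' y')
      = fun p => pd vx (UU Ω) p * pd vy (UU φ) p - pd vy (UU Ω) p * pd vx (UU φ) p
          - lam * (UU φ) p := by
    funext p
    obtain ⟨a, b, c⟩ := p
    show bracket Ω φ a b c - lam * φ a b c = _
    rw [bracket_eq dF dG]
  have hFψ : ContDiff ℝ (⊤ : ℕ∞) (fun p => pd vx (UU Ω) p * pd vy (UU φ) p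
      - pd vy (UU Ω) p * pd vx (UU φ) p - lam * (UU φ) p) :=
    (((smooth_pd hF vx).mul (smooth_pd hG vy)).sub
      ((smooth_pd hF vy).mul (smooth_pd hG vx))).sub (contDiff_const.mul hG)
  have dψ : Differentiable ℝ (UU (fun t' x' y' => bracket Ω φ t' x' y' - lam * φ t' x' y')) := by
    rw [hUψ]; exact hFψ.differentiable (by simp)
  intro t x y
  rw [pt_eq dψ, bracket_eq dP dψ, hUψ]
  rw [expandBr hF hG lam vt (t, x, y), expandBr hF hG lam vy (t, x, y),
    expandBr hF hG lam vx (t, x, y)]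
  rw [pd_comm hF vt vx, pd_comm hF vt vy, pd_comm hG vt vx, pd_comm hG vt vy]
  rw [hEf, hGf]
  rw [expandE hP hF vx (t, x, y), expandE hP hF vy (t, x, y),
    expandE hP hG vx (t, x, y), expandE hP hG vy (t, x, y)]
  rw [pd_comm hF vy vx, pd_comm hG vy vx, pd_comm hP vy vx]
  ring
end

section
/- Let u : ℝ × ℝ³ → ℝ³ and Ω : ℝ × ℝ³ → ℝ³ be smooth, and let φ : ℝ × ℝ³ → ℂ be smooth. Suppose Ω satisfies the 3D Euler equation in vorticity form, ∂ₜΩ + (u·∇)Ω − (Ω·∇)u = 0, and φ satisfies ∂ₜφ + (u·∇)φ = 0. Then for every complex constant λ, the function ψ := (Ω·∇)φ − λφ also satisfies ∂ₜψ + (u·∇)ψ = 0. (This is the compatibility of the scalar Lax pair L φ = (Ω·∇)φ = λφ, ∂ₜφ + A φ = 0 with A φ = (u·∇)φ, for the 3D Euler equation.) -/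
/-- Directional (convective) derivative `(v·∇)g` of a real vector field `g` on ℝ³,
with coefficient vector `v`. -/
noncomputable def vdotGradR (v : Fin 3 → ℝ) (g : (Fin 3 → ℝ) → (Fin 3 → ℝ))
    (x : Fin 3 → ℝ) : Fin 3 → ℝ :=
  ∑ i : Fin 3, v i • fderiv ℝ g x (Pi.single i 1)

/-- Directional (convective) derivative `(v·∇)g` of a complex scalar function `g` on ℝ³,
with real coefficient vector `v`. -/
noncomputable def vdotGradC (v : Fin 3 → ℝ) (g : (Fin 3 → ℝ) → ℂ)
    (x : Fin 3 → ℝ) : ℂ :=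
  ∑ i : Fin 3, v i • fderiv ℝ g x (Pi.single i 1)

section LaxAux
variable {G : Type*} [NormedAddCommGroup G] [NormedSpace ℝ G]

lemma lax_deriv_slice {F : ℝ × (Fin 3 → ℝ) → G} (hF : ContDiff ℝ (⊤ : ℕ∞) F) (t : ℝ) (x : Fin 3 → ℝ) :
    deriv (fun s => F (s, x)) t = fderiv ℝ F (t, x) (1, 0) := by
  have h1 : HasDerivAt (fun s : ℝ => ((s, x) : ℝ × (Fin 3 → ℝ))) (1, 0) t :=
    (hasDerivAt_id t).prodMk (hasDerivAt_const t x)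
  exact (((hF.differentiable (by simp)) (t, x)).hasFDerivAt.comp_hasDerivAt t h1).deriv

lemma lax_fderiv_slice {F : ℝ × (Fin 3 → ℝ) → G} (hF : ContDiff ℝ (⊤ : ℕ∞) F) (t : ℝ)
    (x v : Fin 3 → ℝ) :
    fderiv ℝ (fun y => F (t, y)) x v = fderiv ℝ F (t, x) (0, v) := by
  have h1 : HasFDerivAt (fun y : Fin 3 → ℝ => ((t, y) : ℝ × (Fin 3 → ℝ)))
      ((0 : (Fin 3 → ℝ) →L[ℝ] ℝ).prod (ContinuousLinearMap.id ℝ (Fin 3 → ℝ))) x :=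
    (hasFDerivAt_const t x).prodMk (hasFDerivAt_id x)
  have h2 : fderiv ℝ (fun y => F (t, y)) x = (fderiv ℝ F (t, x)).comp
      ((0 : (Fin 3 → ℝ) →L[ℝ] ℝ).prod (ContinuousLinearMap.id ℝ (Fin 3 → ℝ))) :=
    (((hF.differentiable (by simp)) (t, x)).hasFDerivAt.comp x h1).fderiv
  rw [h2]
  simp

lemma lax_contDiff_fderiv_apply {F : ℝ × (Fin 3 → ℝ) → G} (hF : ContDiff ℝ (⊤ : ℕ∞) F)
    (w : ℝ × (Fin 3 → ℝ)) : ContDiff ℝ (⊤ : ℕ∞) (fun q => fderiv ℝ F q w) :=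
  (ContinuousLinearMap.apply ℝ G w).contDiff.comp (hF.fderiv_right (by simp))

lemma lax_fderiv_apply_eq {F : ℝ × (Fin 3 → ℝ) → G} (hF : ContDiff ℝ (⊤ : ℕ∞) F)
    (p a b : ℝ × (Fin 3 → ℝ)) :
    fderiv ℝ (fun q => fderiv ℝ F q a) p b = fderiv ℝ (fderiv ℝ F) p b a := by
  have hdiff : DifferentiableAt ℝ (fderiv ℝ F) p :=
    ((hF.fderiv_right (m := (⊤ : ℕ∞)) (by simp)).differentiable (by simp)) p
  have := ((ContinuousLinearMap.apply ℝ G a).hasFDerivAt.comp p hdiff.hasFDerivAt).fderiv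
  have h2 : fderiv ℝ (fun q => fderiv ℝ F q a) p
      = (ContinuousLinearMap.apply ℝ G a).comp (fderiv ℝ (fderiv ℝ F) p) := this
  rw [h2]
  rfl

lemma lax_fderiv_swap {F : ℝ × (Fin 3 → ℝ) → G} (hF : ContDiff ℝ (⊤ : ℕ∞) F)
    (p v w : ℝ × (Fin 3 → ℝ)) :
    fderiv ℝ (fun q => fderiv ℝ F q w) p v = fderiv ℝ (fun q => fderiv ℝ F q v) p w := by
  have hsymm : IsSymmSndFDerivAt ℝ F p := hF.contDiffAt.isSymmSndFDerivAt (by rw [minSmoothness_of_isRCLikeNormedField]; exact WithTop.coe_le_coe.mpr (le_top : (2 : ℕ∞) ≤ ⊤))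
  rw [lax_fderiv_apply_eq hF p w v, lax_fderiv_apply_eq hF p v w]
  exact hsymm v w

lemma lax_clm_comb {M : Type*} [NormedAddCommGroup M] [NormedSpace ℝ M]
    (L : (ℝ × (Fin 3 → ℝ)) →L[ℝ] M) (a : Fin 3 → ℝ) :
    L (1, 0) + ∑ j : Fin 3, a j • L (0, Pi.single j 1) = L (1, a) := by
  have h2 : ∑ j : Fin 3, a j • ((0:ℝ), (Pi.single j 1 : Fin 3 → ℝ)) = ((0:ℝ), a) := by
    rw [Prod.ext_iff]
    constructor
    · simp [Prod.fst_sum]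
    · simp only [Prod.snd_sum, Prod.smul_snd]
      funext y
      simp [Finset.sum_apply, Pi.single_apply]
  have h3 : ((1:ℝ), a) = ((1:ℝ), (0 : Fin 3 → ℝ)) + ∑ j : Fin 3, a j • ((0:ℝ), (Pi.single j 1 : Fin 3 → ℝ)) := by
    rw [h2]; simp
  rw [h3, map_add, map_sum]
  congr 1
  refine Finset.sum_congr rfl fun j _ => ?_
  rw [map_smul]

end LaxAux

/-- Compatibility of the scalar Lax pair of the 3D Euler equation: if
`∂ₜΩ + (u·∇)Ω − (Ω·∇)u = 0` and `∂ₜφ + (u·∇)φ = 0`, then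
`ψ := (Ω·∇)φ − λφ` satisfies `∂ₜψ + (u·∇)ψ = 0`. -/
theorem scalar_lax_pair_3d_euler
    (u Ω : ℝ → (Fin 3 → ℝ) → (Fin 3 → ℝ))
    (φ : ℝ → (Fin 3 → ℝ) → ℂ)
    (hu : ContDiff ℝ (⊤ : ℕ∞) (fun q : ℝ × (Fin 3 → ℝ) => u q.1 q.2))
    (hΩ : ContDiff ℝ (⊤ : ℕ∞) (fun q : ℝ × (Fin 3 → ℝ) => Ω q.1 q.2))
    (hφ : ContDiff ℝ (⊤ : ℕ∞) (fun q : ℝ × (Fin 3 → ℝ) => φ q.1 q.2))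
    (heuler : ∀ (t : ℝ) (x : Fin 3 → ℝ),
      deriv (fun s => Ω s x) t
        + vdotGradR (u t x) (Ω t) x - vdotGradR (Ω t x) (u t) x = 0)
    (haux : ∀ (t : ℝ) (x : Fin 3 → ℝ),
      deriv (fun s => φ s x) t + vdotGradC (u t x) (φ t) x = 0)
    (lam : ℂ) :
    ∀ (t : ℝ) (x : Fin 3 → ℝ),
      deriv (fun s => vdotGradC (Ω s x) (φ s) x - lam * φ s x) t
        + vdotGradC (u t x)
            (fun x' => vdotGradC (Ω t x') (φ t) x' - lam * φ t x') x = 0 := by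
  intro t x
  classical
  set Φ : ℝ × (Fin 3 → ℝ) → ℂ := fun q => φ q.1 q.2 with hΦdef
  set U : ℝ × (Fin 3 → ℝ) → Fin 3 → ℝ := fun q => u q.1 q.2 with hUdef
  set W : ℝ × (Fin 3 → ℝ) → Fin 3 → ℝ := fun q => Ω q.1 q.2 with hWdef
  -- smoothness of derived functions
  have hA : ∀ v : ℝ × (Fin 3 → ℝ), ContDiff ℝ (⊤ : ℕ∞) (fun q => fderiv ℝ Φ q v) :=
    fun v => lax_contDiff_fderiv_apply hφ v
  have hUj : ∀ j : Fin 3, ContDiff ℝ (⊤ : ℕ∞) (fun q => U q j) :=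
    fun j => (ContinuousLinearMap.proj j : (Fin 3 → ℝ) →L[ℝ] ℝ).contDiff.comp hu
  have hWj : ∀ j : Fin 3, ContDiff ℝ (⊤ : ℕ∞) (fun q => W q j) :=
    fun j => (ContinuousLinearMap.proj j : (Fin 3 → ℝ) →L[ℝ] ℝ).contDiff.comp hΩ
  -- fderiv of components
  have hfU : ∀ (j : Fin 3) (q v : ℝ × (Fin 3 → ℝ)),
      fderiv ℝ (fun q' => U q' j) q v = (fderiv ℝ U q v) j := by
    intro j q v
    have h2 : fderiv ℝ (fun q' => U q' j) q
        = (ContinuousLinearMap.proj j : (Fin 3 → ℝ) →L[ℝ] ℝ).comp (fderiv ℝ U q) :=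
      ((ContinuousLinearMap.proj j : (Fin 3 → ℝ) →L[ℝ] ℝ).hasFDerivAt.comp q
        ((hu.differentiable (by simp) q).hasFDerivAt)).fderiv
    rw [h2]; rfl
  have hfW : ∀ (j : Fin 3) (q v : ℝ × (Fin 3 → ℝ)),
      fderiv ℝ (fun q' => W q' j) q v = (fderiv ℝ W q v) j := by
    intro j q v
    have h2 : fderiv ℝ (fun q' => W q' j) q
        = (ContinuousLinearMap.proj j : (Fin 3 → ℝ) →L[ℝ] ℝ).comp (fderiv ℝ W q) :=
      ((ContinuousLinearMap.proj j : (Fin 3 → ℝ) →L[ℝ] ℝ).hasFDerivAt.comp q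
        ((hΩ.differentiable (by simp) q).hasFDerivAt)).fderiv
    rw [h2]; rfl
  -- global form of the transport equation for φ
  have hH0 : ∀ q : ℝ × (Fin 3 → ℝ),
      fderiv ℝ Φ q (1, 0) + ∑ j : Fin 3, U q j • fderiv ℝ Φ q (0, Pi.single j 1) = 0 := by
    rintro ⟨s, y⟩
    have h1 := haux s y
    rw [vdotGradC] at h1
    have h2 : deriv (fun s' => φ s' y) s = fderiv ℝ Φ (s, y) (1, 0) := lax_deriv_slice hφ s y
    have h3 : ∀ v, fderiv ℝ (φ s) y v = fderiv ℝ Φ (s, y) (0, v) :=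
      fun v => lax_fderiv_slice hφ s y v
    rw [h2] at h1
    rw [← h1]
    congr 1
    exact Finset.sum_congr rfl fun j _ => by rw [h3]
  -- Euler equation at (t, x)
  have hWeq : fderiv ℝ W (t, x) ((1:ℝ), u t x)
      = ∑ j : Fin 3, W (t, x) j • fderiv ℝ U (t, x) (0, Pi.single j 1) := by
    have h1 := heuler t x
    rw [vdotGradR, vdotGradR] at h1
    have h2 : deriv (fun s => Ω s x) t = fderiv ℝ W (t, x) (1, 0) := lax_deriv_slice hΩ t x
    have h3 : ∀ v, fderiv ℝ (Ω t) x v = fderiv ℝ W (t, x) (0, v) :=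
      fun v => lax_fderiv_slice hΩ t x v
    have h4 : ∀ v, fderiv ℝ (u t) x v = fderiv ℝ U (t, x) (0, v) :=
      fun v => lax_fderiv_slice hu t x v
    rw [h2] at h1
    have h6 := sub_eq_zero.mp h1
    calc fderiv ℝ W (t, x) ((1:ℝ), u t x)
        = fderiv ℝ W (t, x) (1, 0)
            + ∑ i : Fin 3, u t x i • fderiv ℝ W (t, x) (0, Pi.single i 1) :=
          (lax_clm_comb (fderiv ℝ W (t, x)) (u t x)).symm
      _ = fderiv ℝ W (t, x) (1, 0)
            + ∑ i : Fin 3, u t x i • fderiv ℝ (Ω t) x (Pi.single i 1) := by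
          congr 1
          exact Finset.sum_congr rfl fun i _ => by rw [h3]
      _ = ∑ i : Fin 3, Ω t x i • fderiv ℝ (u t) x (Pi.single i 1) := h6
      _ = ∑ j : Fin 3, W (t, x) j • fderiv ℝ U (t, x) (0, Pi.single j 1) :=
          Finset.sum_congr rfl fun i _ => by rw [h4]
  -- component form of Euler
  have hWcomp : ∀ i : Fin 3, fderiv ℝ (fun q => W q i) (t, x) ((1:ℝ), u t x)
      = ∑ j : Fin 3, W (t, x) j * (fderiv ℝ U (t, x) (0, Pi.single j 1)) i := by
    intro i
    rw [hfW i (t, x) ((1:ℝ), u t x), hWeq]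
    simp [Finset.sum_apply]
  -- transport of φ at (t, x)
  have hφ0 : fderiv ℝ Φ (t, x) ((1:ℝ), u t x) = 0 := by
    have h := hH0 (t, x)
    rw [lax_clm_comb (fderiv ℝ Φ (t, x)) (U (t, x))] at h
    exact h
  -- spatial derivative of the transport equation, with symmetry of second derivatives
  have hstar : ∀ i : Fin 3,
      fderiv ℝ (fun q => fderiv ℝ Φ q (0, Pi.single i 1)) (t, x) ((1:ℝ), u t x)
        = - ∑ j : Fin 3, (fderiv ℝ U (t, x) (0, Pi.single i 1)) j
            • fderiv ℝ Φ (t, x) (0, Pi.single j 1) := by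
    intro i
    set ei : ℝ × (Fin 3 → ℝ) := ((0:ℝ), (Pi.single i 1 : Fin 3 → ℝ)) with hei
    have hdiffA : ∀ v, DifferentiableAt ℝ (fun q => fderiv ℝ Φ q v) (t, x) :=
      fun v => ((hA v).differentiable (by simp)) (t, x)
    have hdiffUj : ∀ j, DifferentiableAt ℝ (fun q => U q j) (t, x) :=
      fun j => ((hUj j).differentiable (by simp)) (t, x)
    have hzero : fderiv ℝ (fun q => fderiv ℝ Φ q (1, 0)
        + ∑ j : Fin 3, U q j • fderiv ℝ Φ q (0, Pi.single j 1)) (t, x) ei = 0 := by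
      have hfun : (fun q => fderiv ℝ Φ q (1, 0)
          + ∑ j : Fin 3, U q j • fderiv ℝ Φ q (0, Pi.single j 1)) = fun _ => (0 : ℂ) :=
        funext hH0
      rw [hfun]
      simp
    have hexp : fderiv ℝ (fun q => fderiv ℝ Φ q (1, 0)
        + ∑ j : Fin 3, U q j • fderiv ℝ Φ q (0, Pi.single j 1)) (t, x) ei
      = fderiv ℝ (fun q => fderiv ℝ Φ q (1, 0)) (t, x) ei
        + ∑ j : Fin 3, (U (t, x) j
              • fderiv ℝ (fun q => fderiv ℝ Φ q (0, Pi.single j 1)) (t, x) ei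
            + fderiv ℝ (fun q => U q j) (t, x) ei • fderiv ℝ Φ (t, x) (0, Pi.single j 1)) := by
      rw [fderiv_fun_add (hdiffA (1, 0))
        (DifferentiableAt.fun_sum fun j _ => (hdiffUj j).fun_smul (hdiffA (0, Pi.single j 1)))]
      rw [fderiv_fun_sum fun j _ => (hdiffUj j).fun_smul (hdiffA (0, Pi.single j 1))]
      simp only [ContinuousLinearMap.add_apply, ContinuousLinearMap.sum_apply]
      congr 1
      refine Finset.sum_congr rfl fun j _ => ?_
      rw [fderiv_fun_smul (hdiffUj j) (hdiffA (0, Pi.single j 1))]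
      simp only [ContinuousLinearMap.add_apply, ContinuousLinearMap.smul_apply,
        ContinuousLinearMap.smulRight_apply]
    have h6 := hexp.symm.trans hzero
    have h9 : ∀ j : Fin 3, fderiv ℝ (fun q => fderiv ℝ Φ q (0, Pi.single j 1)) (t, x) ei
        = fderiv ℝ (fun q => fderiv ℝ Φ q ei) (t, x) (0, Pi.single j 1) :=
      fun j => lax_fderiv_swap hφ (t, x) ei (0, Pi.single j 1)
    rw [lax_fderiv_swap hφ (t, x) ei ((1:ℝ), (0 : Fin 3 → ℝ))] at h6
    simp only [h9] at h6
    rw [Finset.sum_add_distrib, ← add_assoc,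
      lax_clm_comb (fderiv ℝ (fun q => fderiv ℝ Φ q ei) (t, x)) (U (t, x))] at h6
    have h10 : fderiv ℝ (fun q => fderiv ℝ Φ q ei) (t, x) ((1:ℝ), u t x)
        = fderiv ℝ (fun q => fderiv ℝ Φ q ei) (t, x) ((1:ℝ), U (t, x)) := rfl
    rw [h10]
    have h11 := eq_neg_of_add_eq_zero_left h6
    rw [h11]
    congr 1
    exact Finset.sum_congr rfl fun j _ => by rw [hfU j (t, x) ei]
  -- definition of ψ as a function on space-time
  set Ψ : ℝ × (Fin 3 → ℝ) → ℂ :=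
    fun q => (∑ i : Fin 3, W q i • fderiv ℝ Φ q (0, Pi.single i 1)) - lam * Φ q with hΨdef
  have hΨ : ContDiff ℝ (⊤ : ℕ∞) Ψ :=
    (ContDiff.sum fun i _ => (hWj i).smul (hA (0, Pi.single i 1))).sub (contDiff_const.mul hφ)
  have hpsi_slice : ∀ s y, vdotGradC (Ω s y) (φ s) y - lam * φ s y = Ψ (s, y) := by
    intro s y
    have h3 : ∀ v, fderiv ℝ (φ s) y v = fderiv ℝ Φ (s, y) (0, v) :=
      fun v => lax_fderiv_slice hφ s y v
    rw [hΨdef, vdotGradC]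
    congr 1
    exact Finset.sum_congr rfl fun i _ => by rw [h3]
  have hgoal1 : (fun s => vdotGradC (Ω s x) (φ s) x - lam * φ s x) = (fun s => Ψ (s, x)) :=
    funext fun s => hpsi_slice s x
  have hgoal2 : (fun x' => vdotGradC (Ω t x') (φ t) x' - lam * φ t x') = (fun y => Ψ (t, y)) :=
    funext fun y => hpsi_slice t y
  have hslΨ : ∀ v, fderiv ℝ (fun y => Ψ (t, y)) x v = fderiv ℝ Ψ (t, x) (0, v) :=
    fun v => lax_fderiv_slice hΨ t x v
  rw [hgoal1, hgoal2, lax_deriv_slice hΨ t x, vdotGradC]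
  simp only [hslΨ]
  rw [lax_clm_comb (fderiv ℝ Ψ (t, x)) (u t x)]
  -- expand the derivative of Ψ
  have hΨexp : fderiv ℝ Ψ (t, x) ((1:ℝ), u t x)
      = (∑ i : Fin 3,
          (W (t, x) i • fderiv ℝ (fun q => fderiv ℝ Φ q (0, Pi.single i 1)) (t, x) ((1:ℝ), u t x)
            + fderiv ℝ (fun q => W q i) (t, x) ((1:ℝ), u t x)
                • fderiv ℝ Φ (t, x) (0, Pi.single i 1)))
        - lam * fderiv ℝ Φ (t, x) ((1:ℝ), u t x) := by
    have hdiffA : ∀ v, DifferentiableAt ℝ (fun q => fderiv ℝ Φ q v) (t, x) :=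
      fun v => ((hA v).differentiable (by simp)) (t, x)
    have hdiffWj : ∀ j, DifferentiableAt ℝ (fun q => W q j) (t, x) :=
      fun j => ((hWj j).differentiable (by simp)) (t, x)
    have hdΦ : DifferentiableAt ℝ Φ (t, x) := (hφ.differentiable (by simp)) (t, x)
    rw [hΨdef]
    rw [fderiv_fun_sub (DifferentiableAt.fun_sum fun i _ => (hdiffWj i).fun_smul (hdiffA (0, Pi.single i 1)))
      ((differentiableAt_const lam).fun_mul hdΦ)]
    rw [fderiv_const_mul hdΦ lam]
    rw [fderiv_fun_sum fun i _ => (hdiffWj i).fun_smul (hdiffA (0, Pi.single i 1))]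
    simp only [ContinuousLinearMap.sub_apply, ContinuousLinearMap.sum_apply,
      ContinuousLinearMap.smul_apply, smul_eq_mul]
    congr 1
    refine Finset.sum_congr rfl fun i _ => ?_
    rw [fderiv_fun_smul (hdiffWj i) (hdiffA (0, Pi.single i 1))]
    simp only [ContinuousLinearMap.add_apply, ContinuousLinearMap.smul_apply,
      ContinuousLinearMap.smulRight_apply]
  rw [hΨexp, hφ0, mul_zero, sub_zero]
  have hsubst : ∀ i : Fin 3,
      W (t, x) i • fderiv ℝ (fun q => fderiv ℝ Φ q (0, Pi.single i 1)) (t, x) ((1:ℝ), u t x)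
        + fderiv ℝ (fun q => W q i) (t, x) ((1:ℝ), u t x) • fderiv ℝ Φ (t, x) (0, Pi.single i 1)
      = - (∑ j : Fin 3, (W (t, x) i * (fderiv ℝ U (t, x) (0, Pi.single i 1)) j)
            • fderiv ℝ Φ (t, x) (0, Pi.single j 1))
        + ∑ j : Fin 3, (W (t, x) j * (fderiv ℝ U (t, x) (0, Pi.single j 1)) i)
            • fderiv ℝ Φ (t, x) (0, Pi.single i 1) := by
    intro i
    rw [hstar i, hWcomp i, smul_neg, Finset.smul_sum, Finset.sum_smul]
    simp only [smul_smul]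
  simp only [hsubst]
  rw [Finset.sum_add_distrib, Finset.sum_neg_distrib]
  rw [show (∑ i : Fin 3, ∑ j : Fin 3, (W (t, x) i * (fderiv ℝ U (t, x) (0, Pi.single i 1)) j)
        • fderiv ℝ Φ (t, x) (0, Pi.single j 1))
      = ∑ i : Fin 3, ∑ j : Fin 3, (W (t, x) j * (fderiv ℝ U (t, x) (0, Pi.single j 1)) i)
        • fderiv ℝ Φ (t, x) (0, Pi.single i 1) from Finset.sum_comm]
  exact neg_add_cancel _
end

section
/- Eigenvalues of L_{k̂} come in four types (real pairs, purely imaginary pairs, quadruples, and zeros): Let p ∈ ℤ²∖{0}, let k̂ ∈ ℤ² be such that k̂ + np ≠ 0 for every n ∈ ℤ, and let Γ ∈ ℂ. Call λ ∈ ℂ an eigenvalue of L_{k̂} if there exists a nonzero ω ∈ ℓ²(ℤ, ℂ) with λ ω_n = Γ A(p, k̂+(n−1)p) ω_{n−1} + Γ̄ A(−p, k̂+(n+1)p) ω_{n+1} for all n ∈ ℤ. Then the set of eigenvalues of L_{k̂} is invariant under λ ↦ −λ and under λ ↦ λ̄ (complex conjugation); consequently every eigenvalue belongs to a real pair (c,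 −c), a purely imaginary pair (id, −id), a quadruple (±c ± id), or is zero. -/
/-!
`L_{k̂}` is a tridiagonal operator on `ℓ²(ℤ)` whose sub-diagonal entries are `Γ` times real numbers
and whose super-diagonal entries are `Γ̄` times real numbers. Conjugating by the diagonal unitary
`ωₙ ↦ (-1)ⁿ ωₙ` flips the sign of both off-diagonals, so it turns `L_{k̂}` into `-L_{k̂}`.
Complex conjugation turns `L_{k̂}` into the operator with `Γ` and `Γ̄` swapped, and the diagonal
unitary `ωₙ ↦ cⁿ ωₙ` with `c Γ̄ = Γ`, `|c| = 1` swaps them back. Both maps preserve `|ωₙ|`,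
hence square-summability and non-vanishing of the eigenvector.
-/

/-- Squared euclidean norm of a lattice point `k ∈ ℤ²`, as a real number. -/
def nsq (k : ℤ × ℤ) : ℝ := ((k.1 ^ 2 + k.2 ^ 2 : ℤ) : ℝ)

/-- The coefficient A(p,q) = (1/2)(|q|⁻² − |p|⁻²)(p₁q₂ − p₂q₁). -/
noncomputable def coeffA (p q : ℤ × ℤ) : ℝ :=
  (1 / 2) * ((nsq q)⁻¹ - (nsq p)⁻¹) * ((p.1 * q.2 - p.2 * q.1 : ℤ) : ℝ)

/-- λ is an eigenvalue of L_{k̂} if there is a nonzero ω ∈ ℓ²(ℤ,ℂ) with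
λ ωₙ = Γ A(p, k̂+(n−1)p) ω_{n−1} + Γ̄ A(−p, k̂+(n+1)p) ω_{n+1} for all n. -/
def IsEigenvalueLk (p khat : ℤ × ℤ) (Γ lam : ℂ) : Prop :=
  ∃ ω : ℤ → ℂ, Memℓp ω 2 ∧ ω ≠ 0 ∧
    ∀ n : ℤ, lam * ω n =
      Γ * (coeffA p (khat + (n - 1) • p) : ℂ) * ω (n - 1)
      + (starRingEnd ℂ) Γ * (coeffA (-p) (khat + (n + 1) • p) : ℂ) * ω (n + 1)

open ComplexConjugate

def IsTridiagonalEigenvector (a b : ℤ → ℂ) (lam : ℂ) (ω : ℤ → ℂ) : Prop :=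
  ∀ n, lam * ω n = a n * ω (n - 1) + b n * ω (n + 1)

namespace IsTridiagonalEigenvector

variable {a b : ℤ → ℂ} {lam : ℂ} {ω : ℤ → ℂ}

theorem alternating_sign (h : IsTridiagonalEigenvector a b lam ω) :
    IsTridiagonalEigenvector a b (-lam) (fun n => (-1) ^ n * ω n) := by
  intro n
  have hm : (-1 : ℂ) ≠ 0 := by norm_num
  dsimp only
  rw [zpow_sub_one₀ hm, zpow_add_one₀ hm]
  linear_combination (-(-1 : ℂ) ^ n) * h n

theorem gauge_conj {c : ℂ} (hc : c ≠ 0) (ha : ∀ n, conj (a n) = c⁻¹ * a n)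
    (hb : ∀ n, conj (b n) = c * b n) (h : IsTridiagonalEigenvector a b lam ω) :
    IsTridiagonalEigenvector a b (conj lam) (fun n => c ^ n * conj (ω n)) := by
  intro n
  have hconj := congrArg conj (h n)
  simp only [map_add, map_mul] at hconj
  dsimp only
  rw [zpow_sub_one₀ hc, zpow_add_one₀ hc]
  linear_combination c ^ n * hconj + c ^ n * conj (ω (n - 1)) * ha n
    + c ^ n * conj (ω (n + 1)) * hb n

end IsTridiagonalEigenvector

theorem Complex.exists_norm_eq_one_mul_conj_eq (z : ℂ) : ∃ c : ℂ, ‖c‖ = 1 ∧ c * conj z = z := by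
  rcases eq_or_ne z 0 with rfl | hz
  · exact ⟨1, by simp⟩
  · have hz' : conj z ≠ 0 := (map_ne_zero _).mpr hz
    exact ⟨z / conj z, by simp [div_self (norm_ne_zero_iff.mpr hz)], div_mul_cancel₀ z hz'⟩

theorem isEigenvalueLk_of_norm_eq {p khat : ℤ × ℤ} {Γ lam' : ℂ} {ω ω' : ℤ → ℂ}
    (hω : Memℓp ω 2) (hω0 : ω ≠ 0) (hnorm : ∀ n, ‖ω' n‖ = ‖ω n‖)
    (hω' : IsTridiagonalEigenvector (fun n => Γ * coeffA p (khat + (n - 1) • p))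
      (fun n => conj Γ * coeffA (-p) (khat + (n + 1) • p)) lam' ω') :
    IsEigenvalueLk p khat Γ lam' := by
  refine ⟨ω', hω.mono' fun n => (hnorm n).le, fun h0 => hω0 ?_, hω'⟩
  funext n
  exact norm_eq_zero.mp (by simpa [h0] using (hnorm n).symm)

theorem eigenvalues_Lk_symmetry_general
    (p : ℤ × ℤ) (khat : ℤ × ℤ) (Γ : ℂ) :
    ∀ lam : ℂ, IsEigenvalueLk p khat Γ lam →
      IsEigenvalueLk p khat Γ (-lam)
        ∧ IsEigenvalueLk p khat Γ ((starRingEnd ℂ) lam) := by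
  rintro lam ⟨ω, hω, hω0, hωeq⟩
  have hvec : IsTridiagonalEigenvector _ _ lam ω := hωeq
  obtain ⟨c, hc1, hcΓ⟩ := Complex.exists_norm_eq_one_mul_conj_eq Γ
  have hc0 : c ≠ 0 := norm_ne_zero_iff.mp (by simp [hc1])
  have hconjΓ : conj Γ = c⁻¹ * Γ := (eq_inv_mul_iff_mul_eq₀ hc0).mpr hcΓ
  refine ⟨isEigenvalueLk_of_norm_eq hω hω0 (fun n => by simp) hvec.alternating_sign,
    isEigenvalueLk_of_norm_eq hω hω0 (fun n => by simp [hc1]) (hvec.gauge_conj hc0 ?_ ?_)⟩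
  · intro n
    simp only [map_mul, Complex.conj_ofReal, hconjΓ, mul_assoc]
  · intro n
    simp only [map_mul, Complex.conj_ofReal, Complex.conj_conj]
    rw [← mul_assoc, hcΓ]

/-- The set of eigenvalues of L_{k̂} is invariant under λ ↦ −λ and under complex
conjugation λ ↦ λ̄; consequently eigenvalues come in real pairs, purely imaginary
pairs, quadruples, or are zero. -/
theorem eigenvalues_Lk_symmetry
    (p : ℤ × ℤ) (hp : p ≠ 0) (khat : ℤ × ℤ)
    (hk : ∀ n : ℤ, khat + n • p ≠ 0) (Γ : ℂ) :
    ∀ lam : ℂ, IsEigenvalueLk p khat Γ lam →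
      IsEigenvalueLk p khat Γ (-lam)
        ∧ IsEigenvalueLk p khat Γ ((starRingEnd ℂ) lam) :=
  eigenvalues_Lk_symmetry_general p khat Γ
end

section
/- Spectral theorem for L_{k̂}, case Σ_{k̂} ∩ D̄_{|p|} ≠ ∅, absence of residual spectrum: Let p ∈ ℤ²∖{0}, let k̂ ∈ ℤ² be such that k̂ + np ≠ 0 for every n ∈ ℤ, and let Γ ∈ ℂ. Assume there exists n ∈ ℤ with |k̂ + np| ≤ |p| (i.e. the class Σ_{k̂} meets the closed disk D̄_{|p|}). Then the residual spectrum of the bounded operator L_{k̂} on ℓ²(ℤ, ℂ) is empty: for every λ ∈ ℂ, if L_{k̂} − λI is injective then its range is dense in ℓ²(ℤ, ℂ). -/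
open scoped ComplexConjugate lp

lemma coeffA_neg_left (p q : ℤ × ℤ) : coeffA (-p) q = -coeffA p q := by
  simp only [coeffA, nsq, Prod.fst_neg, Prod.snd_neg]
  push_cast
  ring

lemma coeffA_add_zsmul (p k : ℤ × ℤ) (n : ℤ) :
    coeffA p (k + n • p) =
      1 / 2 * ((nsq (k + n • p))⁻¹ - (nsq p)⁻¹) * ((p.1 * k.2 - p.2 * k.1 : ℤ) : ℝ) := by
  simp only [coeffA, Prod.fst_add, Prod.snd_add, Prod.smul_fst, Prod.smul_snd, smul_eq_mul]
  congr 2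
  ring

lemma one_le_sq_add_sq {k : ℤ × ℤ} (hk : k ≠ 0) : 1 ≤ k.1 ^ 2 + k.2 ^ 2 := by
  obtain ⟨a, b⟩ := k
  have : a ≠ 0 ∨ b ≠ 0 := by
    by_contra! h
    exact hk (Prod.ext h.1 h.2)
  rcases this with h | h <;> nlinarith [Int.one_le_abs h, sq_abs a, sq_abs b]

lemma one_div_mul_add_one_le_abs_inv_sub_inv {a b : ℤ} (ha : 1 ≤ a) (hb : 1 ≤ b) (hab : a ≠ b) :
    1 / ((b : ℝ) * (b + 1)) ≤ |(a : ℝ)⁻¹ - (b : ℝ)⁻¹| := by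
  have ha' : (1 : ℝ) ≤ a := by exact_mod_cast ha
  have hb' : (1 : ℝ) ≤ b := by exact_mod_cast hb
  rcases hab.lt_or_gt with h | h
  · have h' : (a : ℝ) + 1 ≤ b := by exact_mod_cast h
    rw [abs_of_nonneg (sub_nonneg.2 (inv_anti₀ (by positivity) (by linarith))),
      div_le_iff₀ (by positivity)]
    field_simp
    nlinarith
  · have h' : (b : ℝ) + 1 ≤ a := by exact_mod_cast h
    rw [abs_of_nonpos (sub_nonpos.2 (inv_anti₀ (by positivity) (by linarith))), neg_sub,
      div_le_iff₀ (by positivity)]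
    field_simp
    nlinarith

lemma exists_pos_le_abs_coeffA {p k : ℤ × ℤ} (hp : p ≠ 0) (hk : ∀ n : ℤ, k + n • p ≠ 0) :
    ∃ δ > 0, ∀ n : ℤ, coeffA p (k + n • p) ≠ 0 → δ ≤ |coeffA p (k + n • p)| := by
  simp only [coeffA_add_zsmul]
  rcases eq_or_ne (p.1 * k.2 - p.2 * k.1) 0 with hD | hD
  · exact ⟨1, one_pos, fun n hn => absurd (by simp [hD]) hn⟩
  have hP : 1 ≤ p.1 ^ 2 + p.2 ^ 2 := one_le_sq_add_sq hp
  refine ⟨1 / 2 * (1 / (nsq p * (nsq p + 1))) * |((p.1 * k.2 - p.2 * k.1 : ℤ) : ℝ)|,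
    by unfold nsq; positivity, fun n hn => ?_⟩
  have hF : nsq (k + n • p) ≠ nsq p := fun h => hn (by rw [h, sub_self, mul_zero, zero_mul])
  rw [abs_mul, abs_mul, abs_of_pos (by norm_num : (0 : ℝ) < 1 / 2)]
  gcongr
  exact one_div_mul_add_one_le_abs_inv_sub_inv (one_le_sq_add_sq (hk n)) hP
    (fun h => hF (by simp only [nsq, h]))

theorem ContinuousLinearMap.denseRange_iff_ker_adjoint_eq_bot {𝕜 E F : Type*} [RCLike 𝕜]
    [NormedAddCommGroup E] [InnerProductSpace 𝕜 E] [CompleteSpace E]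
    [NormedAddCommGroup F] [InnerProductSpace 𝕜 F] [CompleteSpace F] (A : E →L[𝕜] F) :
    DenseRange A ↔ (adjoint A).ker = ⊥ := by
  rw [← orthogonal_range, ← Submodule.topologicalClosure_eq_top_iff,
    ← Submodule.dense_iff_topologicalClosure_eq_top]
  rfl

/-- Where `c n = 0` the division returns `0`. -/
noncomputable def twistedQuotient (Γ : ℂ) (c : ℤ → ℝ) (ψ : ℤ → ℂ) (n : ℤ) : ℂ :=
  (-Γ / conj Γ) ^ n * conj (ψ n) / c n

section twistedQuotient

variable {Γ : ℂ} {c : ℤ → ℝ} {ψ : ℤ → ℂ}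

lemma norm_neg_div_conj_zpow_le_one (Γ : ℂ) (n : ℤ) : ‖(-Γ / conj Γ) ^ n‖ ≤ 1 := by
  rw [norm_zpow, norm_div, norm_neg, Complex.norm_conj]
  rcases eq_or_ne Γ 0 with rfl | hΓ
  · rcases eq_or_ne n 0 with rfl | hn <;> simp [zero_zpow, *]
  · rw [div_self (norm_ne_zero_iff.2 hΓ), one_zpow]

lemma norm_twistedQuotient_le {δ : ℝ} (hδ : 0 < δ) (hc : ∀ n, c n ≠ 0 → δ ≤ |c n|) (n : ℤ) :
    ‖twistedQuotient Γ c ψ n‖ ≤ δ⁻¹ * ‖ψ n‖ := by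
  rcases eq_or_ne (c n) 0 with hn | hn
  · rw [twistedQuotient, hn, Complex.ofReal_zero, div_zero, norm_zero]
    positivity
  rw [twistedQuotient, norm_div, norm_mul, Complex.norm_conj, Complex.norm_real,
    Real.norm_eq_abs, div_eq_mul_inv, mul_comm]
  gcongr
  · exact hc n hn
  · exact mul_le_of_le_one_left (norm_nonneg _) (norm_neg_div_conj_zpow_le_one Γ n)

lemma ofReal_mul_twistedQuotient (hψ : ∀ n, c n = 0 → ψ n = 0) (n : ℤ) :
    (c n : ℂ) * twistedQuotient Γ c ψ n = (-Γ / conj Γ) ^ n * conj (ψ n) := by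
  rcases eq_or_ne (c n) 0 with hn | hn
  · simp [hn, hψ n hn]
  · rw [twistedQuotient, mul_div_cancel₀ _ (by exact_mod_cast hn)]

lemma twistedQuotient_eq_zero_iff (hΓ : Γ ≠ 0) {n : ℤ} (hn : c n ≠ 0) :
    twistedQuotient Γ c ψ n = 0 ↔ ψ n = 0 := by
  have hs : (-Γ / conj Γ) ^ n ≠ 0 := zpow_ne_zero _ (by simp [hΓ])
  simp [twistedQuotient, hs, hn]

end twistedQuotient

def HasTridiagonalForm (Γ : ℂ) (c : ℤ → ℝ) (T : ℓ²(ℤ, ℂ) →L[ℂ] ℓ²(ℤ, ℂ)) : Prop :=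
  ∀ ω n, T ω n = Γ * c (n - 1) * ω (n - 1) - conj Γ * c (n + 1) * ω (n + 1)

namespace HasTridiagonalForm

variable {Γ : ℂ} {c : ℤ → ℝ} {T : ℓ²(ℤ, ℂ) →L[ℂ] ℓ²(ℤ, ℂ)}

open ContinuousLinearMap

lemma apply_single (hT : HasTridiagonalForm Γ c T) (k : ℤ) :
    T (lp.single 2 k 1) = lp.single 2 (k + 1) (Γ * c k) - lp.single 2 (k - 1) (conj Γ * c k) := by
  ext n
  simp only [hT _ n, lp.coeFn_sub, Pi.sub_apply, lp.single_apply, Pi.single_apply]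
  split_ifs <;> first | omega | (subst_vars; simp)

lemma adjoint_apply (hT : HasTridiagonalForm Γ c T) (ψ : ℓ²(ℤ, ℂ)) (k : ℤ) :
    adjoint T ψ k = conj Γ * c k * ψ (k + 1) - Γ * c k * ψ (k - 1) := by
  have h := T.adjoint_inner_right (lp.single 2 k 1) ψ
  rw [lp.inner_single_left, hT.apply_single, inner_sub_left, lp.inner_single_left,
    lp.inner_single_left] at h
  simpa [RCLike.inner_apply, mul_comm, mul_left_comm] using h

lemma apply_eq_of_mul_eq (hT : HasTridiagonalForm Γ c T) {φ χ : ℓ²(ℤ, ℂ)}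
    (h : ∀ m, (c m : ℂ) * φ m = c m * χ m) : T φ = T χ := by
  ext n
  rw [hT, hT]
  linear_combination Γ * h (n - 1) - conj Γ * h (n + 1)

lemma apply_single_eq_zero (hT : HasTridiagonalForm Γ c T) {k : ℤ} (h : Γ * c k = 0) :
    T (lp.single 2 k 1) = 0 := by
  have h' : conj Γ * c k = 0 := by simpa using congr(conj $h)
  rw [hT.apply_single, h, h', lp.single_zero, lp.single_zero, sub_zero]

lemma ne_zero_of_injective (hT : HasTridiagonalForm Γ c T) {lam : ℂ}
    (hinj : Function.Injective ⇑(T - lam • (1 : ℓ²(ℤ, ℂ) →L[ℂ] ℓ²(ℤ, ℂ)))) {k : ℤ}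
    (h : Γ * c k = 0) : lam ≠ 0 := by
  rintro rfl
  have h0 : lp.single 2 k (1 : ℂ) = 0 := hinj (by simp [hT.apply_single_eq_zero h])
  simpa using congr($h0 k)

lemma apply_eq_zero_of_adjoint_eq (hT : HasTridiagonalForm Γ c T) {lam : ℂ}
    (hinj : Function.Injective ⇑(T - lam • (1 : ℓ²(ℤ, ℂ) →L[ℂ] ℓ²(ℤ, ℂ)))) {ψ : ℓ²(ℤ, ℂ)}
    (hψ : adjoint T ψ = conj lam • ψ) {k : ℤ} (h : Γ * c k = 0) :
    ψ k = 0 := by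
  have h' : conj Γ * c k = 0 := by simpa using congr(conj $h)
  have hk : conj lam * ψ k = 0 := by
    have := congr($hψ k)
    rw [hT.adjoint_apply, lp.coeFn_smul, Pi.smul_apply, smul_eq_mul] at this
    linear_combination -this + ψ (k + 1) * h' - ψ (k - 1) * h
  simpa [hT.ne_zero_of_injective hinj h] using hk

lemma exists_eigenvector_of_ofReal_mul_apply (hT : HasTridiagonalForm Γ c T) {lam : ℂ}
    (hlam : ∀ n, c n = 0 → lam ≠ 0) (χ : ℓ²(ℤ, ℂ))
    (hχ : ∀ n, (c n : ℂ) * T χ n = lam * (c n * χ n)) :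
    ∃ φ : ℓ²(ℤ, ℂ), T φ = lam • φ ∧ ∀ n, c n ≠ 0 → φ n = χ n := by
  classical
  let f : ℤ → ℂ := fun n => if c n = 0 then lam⁻¹ * T χ n else χ n
  have hf : Memℓp f 2 := by
    refine ((lp.memℓp χ).norm.add ((lp.memℓp (T χ)).norm.const_mul ‖lam⁻¹‖)).mono fun n => ?_
    simp only [f, Pi.add_apply]
    split_ifs
    · rw [norm_mul]; nlinarith [norm_nonneg (χ n)]
    · nlinarith [norm_nonneg (T χ n), norm_nonneg lam⁻¹]
  refine ⟨⟨f, hf⟩, ?_, fun n hn => if_neg hn⟩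
  have hTf : T ⟨f, hf⟩ = T χ := hT.apply_eq_of_mul_eq fun m => by
    change (c m : ℂ) * f m = _
    by_cases hm : c m = 0 <;> simp [f, hm]
  rw [hTf]
  ext n
  rw [lp.coeFn_smul, Pi.smul_apply, smul_eq_mul]
  change T χ n = lam * f n
  by_cases hn : c n = 0
  · simp [f, hn, hlam n hn]
  · simp only [f, if_neg hn]
    exact mul_left_cancel₀ (by exact_mod_cast hn) ((hχ n).trans (by ring))

lemma ofReal_mul_apply_twistedQuotient (hT : HasTridiagonalForm Γ c T) (hΓ : Γ ≠ 0) {lam : ℂ}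
    {ψ : ℓ²(ℤ, ℂ)} (hψ : adjoint T ψ = conj lam • ψ)
    (hψ_zero : ∀ n, c n = 0 → ψ n = 0) (χ : ℓ²(ℤ, ℂ))
    (hχ : ∀ n, χ n = twistedQuotient Γ c ψ n) (n : ℤ) :
    (c n : ℂ) * T χ n = lam * (c n * χ n) := by
  have e := ofReal_mul_twistedQuotient (Γ := Γ) hψ_zero
  have hrec : Γ * c n * conj (ψ (n + 1)) - conj Γ * c n * conj (ψ (n - 1)) = lam * conj (ψ n) := by
    have := congr(conj ($hψ n))
    rw [hT.adjoint_apply, lp.coeFn_smul, Pi.smul_apply, smul_eq_mul] at this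
    simpa using this
  set s := -Γ / conj Γ
  have hs : s ≠ 0 := by simp [s, hΓ]
  have hΓ' : conj Γ ≠ 0 := by simpa using hΓ
  have hs_left : Γ * s ^ (n - 1) = -conj Γ * s ^ n := by
    rw [zpow_sub_one₀ hs]; simp only [s]; field_simp
  have hs_right : conj Γ * s ^ (n + 1) = -Γ * s ^ n := by
    rw [zpow_add_one₀ hs]; simp only [s]; field_simp
  rw [hT, hχ, hχ, hχ]
  linear_combination c n * Γ * e (n - 1) - c n * conj Γ * e (n + 1) - lam * e n
    + c n * conj (ψ (n - 1)) * hs_left - c n * conj (ψ (n + 1)) * hs_right + s ^ n * hrec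

theorem denseRange_sub_smul (hT : HasTridiagonalForm Γ c T) {δ : ℝ} (hδ : 0 < δ)
    (hc : ∀ n, c n ≠ 0 → δ ≤ |c n|) {lam : ℂ}
    (hinj : Function.Injective ⇑(T - lam • (1 : ℓ²(ℤ, ℂ) →L[ℂ] ℓ²(ℤ, ℂ)))) :
    DenseRange ⇑(T - lam • (1 : ℓ²(ℤ, ℂ) →L[ℂ] ℓ²(ℤ, ℂ))) := by
  rw [denseRange_iff_ker_adjoint_eq_bot, Submodule.eq_bot_iff]
  intro ψ hψ
  have hψ_adj : adjoint T ψ = conj lam • ψ := by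
    simpa [sub_eq_zero, adjoint.map_smulₛₗ, adjoint_one] using hψ
  have hψ_col (n : ℤ) (hn : Γ * c n = 0) : ψ n = 0 := hT.apply_eq_zero_of_adjoint_eq hinj hψ_adj hn
  rcases eq_or_ne Γ 0 with rfl | hΓ
  · ext n
    exact hψ_col n (zero_mul _)
  have hψ_zero (n : ℤ) (hn : c n = 0) : ψ n = 0 := hψ_col n (by simp [hn])
  let χ : ℓ²(ℤ, ℂ) := ⟨twistedQuotient Γ c ψ,
    ((lp.memℓp ψ).norm.const_mul δ⁻¹).mono (norm_twistedQuotient_le hδ hc)⟩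
  obtain ⟨φ, hφ, hφχ⟩ := hT.exists_eigenvector_of_ofReal_mul_apply
    (fun n hn => hT.ne_zero_of_injective hinj (k := n) (by simp [hn])) χ
    (hT.ofReal_mul_apply_twistedQuotient hΓ hψ_adj hψ_zero χ fun _ => rfl)
  have hφ0 : φ = 0 := hinj (by simp [hφ])
  ext n
  by_cases hn : c n = 0
  · exact hψ_zero n hn
  · exact (twistedQuotient_eq_zero_iff hΓ hn).1 (by simpa [hφ0] using (hφχ n hn).symm)

end HasTridiagonalForm

theorem Lk_no_residual_spectrum_general
    (p : ℤ × ℤ) (hp : p ≠ 0) (khat : ℤ × ℤ)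
    (hk : ∀ n : ℤ, khat + n • p ≠ 0)
    (Γ : ℂ)
    (T : lp (fun _ : ℤ => ℂ) 2 →L[ℂ] lp (fun _ : ℤ => ℂ) 2)
    (hT : ∀ (ω : lp (fun _ : ℤ => ℂ) 2) (n : ℤ),
      (T ω) n =
        Γ * (coeffA p (khat + (n - 1) • p) : ℂ) * ω (n - 1)
        + (starRingEnd ℂ) Γ * (coeffA (-p) (khat + (n + 1) • p) : ℂ) * ω (n + 1)) :
    ∀ lam : ℂ,
      Function.Injective
        ⇑(T - lam • (1 : lp (fun _ : ℤ => ℂ) 2 →L[ℂ] lp (fun _ : ℤ => ℂ) 2)) →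
      DenseRange
        ⇑(T - lam • (1 : lp (fun _ : ℤ => ℂ) 2 →L[ℂ] lp (fun _ : ℤ => ℂ) 2)) := by
  intro lam hinj
  obtain ⟨δ, hδ, hc⟩ := exists_pos_le_abs_coeffA hp hk
  have hT' : HasTridiagonalForm Γ (fun n => coeffA p (khat + n • p)) T := fun ω n => by
    rw [hT, coeffA_neg_left]
    push_cast
    ring
  exact hT'.denseRange_sub_smul hδ hc hinj

/-- Spectral theorem for L_{k̂} in the case Σ_{k̂} ∩ D̄_{|p|} ≠ ∅ (some
|k̂ + np| ≤ |p|): the residual spectrum of L_{k̂} on ℓ²(ℤ,ℂ) is empty, i.e. for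
every λ, if L_{k̂} − λI is injective then its range is dense. -/
theorem Lk_no_residual_spectrum
    (p : ℤ × ℤ) (hp : p ≠ 0) (khat : ℤ × ℤ)
    (hk : ∀ n : ℤ, khat + n • p ≠ 0)
    (hmeet : ∃ n : ℤ, nsq (khat + n • p) ≤ nsq p) (Γ : ℂ)
    (T : lp (fun _ : ℤ => ℂ) 2 →L[ℂ] lp (fun _ : ℤ => ℂ) 2)
    (hT : ∀ (ω : lp (fun _ : ℤ => ℂ) 2) (n : ℤ),
      (T ω) n =
        Γ * (coeffA p (khat + (n - 1) • p) : ℂ) * ω (n - 1)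
        + (starRingEnd ℂ) Γ * (coeffA (-p) (khat + (n + 1) • p) : ℂ) * ω (n + 1)) :
    ∀ lam : ℂ,
      Function.Injective
        ⇑(T - lam • (1 : lp (fun _ : ℤ => ℂ) 2 →L[ℂ] lp (fun _ : ℤ => ℂ) 2)) →
      DenseRange
        ⇑(T - lam • (1 : lp (fun _ : ℤ => ℂ) 2 →L[ℂ] lp (fun _ : ℤ => ℂ) 2)) :=
  Lk_no_residual_spectrum_general p hp khat hk Γ T hT
end

section
/- Bound on the number of nonimaginary eigenvalues of the linearized 2D Euler operator: Let p ∈ ℤ²∖{0} and Γ ∈ ℂ. Call λ ∈ ℂ an eigenvalue of the linearized 2D Euler operator L at the fixed point ω* if there exists a nonzero square-summable family ω = (ω_k)_{k ∈ ℤ²∖{0}} of complex numbers satisfying, for every k ∈ ℤ²∖{0}, λ ω_k = Γ A(p, k−p) ω_{k−p} + Γ̄ A(−p, k+p) ω_{k+p}, where a term on the right-hand side is omitted whenever its index k−p or k+p equals 0. Let ζ be the number of lattice points q ∈ ℤ²∖{0} with |q| < |p| and p₁q₂ − p₂q₁ ≠ 0 (points in the open disk of radius |p| not parallel to p). Then the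 set of eigenvalues λ of L with Re λ ≠ 0 is finite and has at most 2ζ elements. -/
/-- λ is an eigenvalue of the linearized 2D Euler operator L at the fixed point ω*
if there is a nonzero square-summable family ω = (ω_k)_{k ∈ ℤ²∖{0}} (encoded as a
function on ℤ² vanishing at 0, so that terms with index 0 are omitted) with
λ ω_k = Γ A(p, k−p) ω_{k−p} + Γ̄ A(−p, k+p) ω_{k+p} for all k ≠ 0. -/
def IsEigenvalueL (p : ℤ × ℤ) (Γ lam : ℂ) : Prop :=
  ∃ ω : ℤ × ℤ → ℂ, Memℓp ω 2 ∧ ω ≠ 0 ∧ ω 0 = 0 ∧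
    ∀ k : ℤ × ℤ, k ≠ 0 → lam * ω k =
      Γ * (coeffA p (k - p) : ℂ) * ω (k - p)
      + (starRingEnd ℂ) Γ * (coeffA (-p) (k + p) : ℂ) * ω (k + p)

/-!
On each line `k + ℤp` the cross product `b = p × k` is constant, and `L` acts there as a
tridiagonal operator whose off-diagonal entries carry the weight `w(q) = |q|⁻² − |p|⁻²`. This
makes `L` skew for the indefinite form `Σₙ w |ωₙ|²` along every line, so eigenvectors with
eigenvalues `λ, λ'` satisfying `λ + conj λ' ≠ 0` are orthogonal for it on every line.

Take eigenvalues all in the open right half-plane (or all in the left one), and a combination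
`v` of eigenvectors vanishing at the `ζ` points where `w > 0` and `b ≠ 0`. Eigenvectors with
`λ ≠ 0` vanish where `b = 0`, so the form of `v` on each line is a vanishing sum of nonpositive
terms; hence `w v = 0`, hence `L v = 0`, and `v = 0` because eigenvectors for distinct nonzero
eigenvalues are independent. Restriction to those `ζ` points is thus injective on the span of
the eigenvectors, which bounds each half-plane by `ζ` eigenvalues.
-/

open ComplexConjugate

theorem Memℓp.summable_norm_sq {α : Type*} {E : α → Type*} [∀ i, NormedAddCommGroup (E i)]
    {f : ∀ i, E i} (hf : Memℓp f 2) : Summable fun i => ‖f i‖ ^ 2 := by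
  simpa using hf.summable (by norm_num)

section SquareSummable

variable {ι 𝕜 : Type*} [RCLike 𝕜]

theorem summable_mul_conj_of_summable_sq {f g : ι → 𝕜} (hf : Summable fun i => ‖f i‖ ^ 2)
    (hg : Summable fun i => ‖g i‖ ^ 2) : Summable fun i => f i * conj (g i) := by
  refine Summable.of_norm_bounded (hf.add hg) fun i => ?_
  rw [norm_mul, RCLike.norm_conj]
  nlinarith [two_mul_le_add_sq ‖f i‖ ‖g i‖, norm_nonneg (f i), norm_nonneg (g i)]

theorem summable_sq_ofReal_mul {ρ : ι → ℝ} {C : ℝ} (hρ : ∀ i, |ρ i| ≤ C) {f : ι → 𝕜}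
    (hf : Summable fun i => ‖f i‖ ^ 2) : Summable fun i => ‖(ρ i : 𝕜) * f i‖ ^ 2 := by
  refine Summable.of_nonneg_of_le (fun i => by positivity) (fun i => ?_) (hf.mul_left (C ^ 2))
  rw [norm_mul, mul_pow, RCLike.norm_ofReal]
  gcongr
  exact hρ i

end SquareSummable

/-- Pairing the recurrence for `a` against `ρ a'`, and that for `a'` against `ρ a`, produces
the same two shifted sums with opposite signs. -/
theorem add_conj_mul_tsum_eq_zero_of_tridiagonal {c C : ℝ} {Γ lam lam' : ℂ} {ρ : ℤ → ℝ}
    (hρ : ∀ n, |ρ n| ≤ C) {a a' : ℤ → ℂ}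
    (ha : Summable fun n => ‖a n‖ ^ 2) (ha' : Summable fun n => ‖a' n‖ ^ 2)
    (hA : ∀ n, lam * a n =
      c / 2 * (Γ * (ρ (n - 1) * a (n - 1)) - conj Γ * (ρ (n + 1) * a (n + 1))))
    (hA' : ∀ n, lam' * a' n =
      c / 2 * (Γ * (ρ (n - 1) * a' (n - 1)) - conj Γ * (ρ (n + 1) * a' (n + 1)))) :
    (lam + conj lam') * ∑' n, ρ n * a n * conj (a' n) = 0 := by
  set u : ℤ → ℂ := fun n => ρ n * a n
  set u' : ℤ → ℂ := fun n => ρ n * a' n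
  have shift : ∀ {f : ℤ → ℂ} (s : ℤ), (Summable fun n => ‖f n‖ ^ 2) →
      Summable fun n => ‖f (n + s)‖ ^ 2 := fun s hf => hf.comp_injective (add_left_injective s)
  have hu := summable_sq_ofReal_mul hρ ha
  have hu' := summable_sq_ofReal_mul hρ ha'
  have hpair : ∀ s t : ℤ, Summable fun n => u (n + s) * conj (u' (n + t)) := fun s t =>
    summable_mul_conj_of_summable_sq (shift s hu) (shift t hu')
  have hprev : Summable fun n => u (n - 1) * conj (u' n) := by
    simpa [sub_eq_add_neg] using hpair (-1) 0
  have hnext : Summable fun n => u (n + 1) * conj (u' n) := by simpa using hpair 1 0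
  have hprev' : Summable fun n => u n * conj (u' (n - 1)) := by
    simpa [sub_eq_add_neg] using hpair 0 (-1)
  have hnext' : Summable fun n => u n * conj (u' (n + 1)) := by simpa using hpair 0 1
  have hX₁ : ∑' n, u (n - 1) * conj (u' n) = ∑' n, u n * conj (u' (n + 1)) := by
    simpa using (Equiv.subRight (1 : ℤ)).tsum_eq fun n => u n * conj (u' (n + 1))
  have hX₂ : ∑' n, u n * conj (u' (n - 1)) = ∑' n, u (n + 1) * conj (u' n) := by
    simpa using ((Equiv.addRight (1 : ℤ)).tsum_eq fun n => u n * conj (u' (n - 1))).symm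
  have hS : lam * ∑' n, ρ n * a n * conj (a' n) =
      c / 2 * (Γ * ∑' n, u (n - 1) * conj (u' n) - conj Γ * ∑' n, u (n + 1) * conj (u' n)) := by
    calc lam * ∑' n, ρ n * a n * conj (a' n)
        = ∑' n, c / 2 * (Γ * (u (n - 1) * conj (u' n)) - conj Γ * (u (n + 1) * conj (u' n))) := by
          rw [← tsum_mul_left]
          congr 1 with n
          simp only [u, u', map_mul, Complex.conj_ofReal]
          linear_combination (ρ n * conj (a' n)) * hA n
      _ = _ := by
          rw [tsum_mul_left, (hprev.mul_left _).tsum_sub (hnext.mul_left _), tsum_mul_left,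
            tsum_mul_left]
  have hS' : conj lam' * ∑' n, ρ n * a n * conj (a' n) =
      c / 2 * (conj Γ * ∑' n, u n * conj (u' (n - 1)) - Γ * ∑' n, u n * conj (u' (n + 1))) := by
    calc conj lam' * ∑' n, ρ n * a n * conj (a' n)
        = ∑' n, c / 2 * (conj Γ * (u n * conj (u' (n - 1))) - Γ * (u n * conj (u' (n + 1)))) := by
          rw [← tsum_mul_left]
          congr 1 with n
          have h := congrArg conj (hA' n)
          simp only [map_mul, map_sub, map_div₀, map_ofNat, Complex.conj_ofReal,
            Complex.conj_conj] at h
          simp only [u, u', map_mul, Complex.conj_ofReal]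
          linear_combination (ρ n * a n) * h
      _ = _ := by
          rw [tsum_mul_left, (hprev'.mul_left _).tsum_sub (hnext'.mul_left _), tsum_mul_left,
            tsum_mul_left]
  rw [add_mul, hS, hS', hX₁, hX₂]
  ring

theorem linearIndependent_comp_of_hasEigenvector {K M N ι : Type*} [Field K] [AddCommGroup M]
    [Module K M] [AddCommGroup N] [Module K N] (f : Module.End K M) (g : M →ₗ[K] N)
    {μ : ι → K} (hμ : Function.Injective μ) (hμ₀ : ∀ i, μ i ≠ 0) {v : ι → M}
    (hv : ∀ i, f.HasEigenvector (μ i) (v i))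
    (hker : ∀ x ∈ Submodule.span K (Set.range v), g x = 0 → f x = 0) :
    LinearIndependent K (g ∘ v) := by
  rw [linearIndependent_iff']
  intro s c hc i hi
  have hx : ∑ j ∈ s, c j • v j ∈ Submodule.span K (Set.range v) :=
    Submodule.sum_mem _ fun j _ => Submodule.smul_mem _ _ (Submodule.subset_span ⟨j, rfl⟩)
  have hfx := hker _ hx (by simpa only [map_sum, map_smul, Function.comp_apply] using hc)
  simp only [map_sum, map_smul, (hv _).apply_eq_smul, smul_smul] at hfx
  have := linearIndependent_iff'.mp (f.eigenvectors_linearIndependent' μ hμ v hv) s _ hfx i hi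
  exact (mul_eq_zero.mp this).resolve_right (hμ₀ i)

namespace LinearizedEuler

/-- For `p ≠ 0`, positive exactly on the punctured open disk of radius `|p|`: at `q = 0` the
junk value `(nsq 0)⁻¹ = 0` makes it negative. -/
noncomputable def weight (p q : ℤ × ℤ) : ℝ := (nsq q)⁻¹ - (nsq p)⁻¹

def cross (p k : ℤ × ℤ) : ℝ := ((p.1 * k.2 - p.2 * k.1 : ℤ) : ℝ)

variable {p : ℤ × ℤ}

theorem nsq_neg (k : ℤ × ℤ) : nsq (-k) = nsq k := by simp [nsq]

theorem inv_nsq_nonneg (k : ℤ × ℤ) : 0 ≤ (nsq k)⁻¹ := by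
  unfold nsq; positivity

theorem inv_nsq_le_one (k : ℤ × ℤ) : (nsq k)⁻¹ ≤ 1 := by
  unfold nsq
  obtain h | h := (by positivity : (0 : ℤ) ≤ k.1 ^ 2 + k.2 ^ 2).eq_or_lt
  · simp [← h]
  · exact inv_le_one_of_one_le₀ (by exact_mod_cast h)

theorem abs_weight_le_one (p q : ℤ × ℤ) : |weight p q| ≤ 1 := by
  have := inv_nsq_nonneg p; have := inv_nsq_nonneg q
  have := inv_nsq_le_one p; have := inv_nsq_le_one q
  rw [weight, abs_le]; constructor <;> linarith

theorem nsq_pos {k : ℤ × ℤ} (hk : k ≠ 0) : 0 < nsq k := by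
  have : k.1 ≠ 0 ∨ k.2 ≠ 0 := by
    contrapose! hk
    exact Prod.ext hk.1 hk.2
  unfold nsq
  exact_mod_cast (by rcases this with h | h <;> positivity : (0 : ℤ) < k.1 ^ 2 + k.2 ^ 2)

theorem ne_zero_and_nsq_lt_of_weight_pos (hp : p ≠ 0) {q : ℤ × ℤ} (h : 0 < weight p q) :
    q ≠ 0 ∧ nsq q < nsq p := by
  have hq : q ≠ 0 := by
    rintro rfl
    rw [weight, show nsq 0 = 0 by simp [nsq], inv_zero, zero_sub, neg_pos] at h
    exact (inv_pos.mpr (nsq_pos hp)).not_gt h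
  exact ⟨hq, (inv_lt_inv₀ (nsq_pos hp) (nsq_pos hq)).mp (by rw [weight] at h; linarith)⟩

theorem cross_add_smul (p k : ℤ × ℤ) (n : ℤ) : cross p (k + n • p) = cross p k := by
  simp only [cross, Prod.fst_add, Prod.snd_add, Prod.smul_fst, Prod.smul_snd, smul_eq_mul]
  push_cast; ring

theorem cross_sub_self (p k : ℤ × ℤ) : cross p (k - p) = cross p k := by
  simpa [sub_eq_add_neg] using cross_add_smul p k (-1)

theorem cross_add_self (p k : ℤ × ℤ) : cross p (k + p) = cross p k := by
  simpa using cross_add_smul p k 1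

theorem coeffA_eq (p q : ℤ × ℤ) : coeffA p q = 1 / 2 * weight p q * cross p q := rfl

theorem coeffA_neg_left (p q : ℤ × ℤ) : coeffA (-p) q = -coeffA p q := by
  simp only [coeffA, nsq_neg, Prod.fst_neg, Prod.snd_neg]; push_cast; ring

variable (p) in
noncomputable def eulerOp (Γ : ℂ) : Module.End ℂ (ℤ × ℤ → ℂ) where
  toFun ω k := Γ * coeffA p (k - p) * ω (k - p) + conj Γ * coeffA (-p) (k + p) * ω (k + p)
  map_add' _ _ := by ext; simp only [Pi.add_apply]; ring
  map_smul' _ _ := by ext; simp only [Pi.smul_apply, smul_eq_mul, RingHom.id_apply]; ring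

variable {Γ : ℂ}

theorem eulerOp_apply (ω : ℤ × ℤ → ℂ) (k : ℤ × ℤ) :
    eulerOp p Γ ω k = cross p k / 2 *
      (Γ * (weight p (k - p) * ω (k - p)) - conj Γ * (weight p (k + p) * ω (k + p))) := by
  simp only [eulerOp, LinearMap.coe_mk, AddHom.coe_mk]
  rw [coeffA_neg_left, coeffA_eq, coeffA_eq, cross_sub_self, cross_add_self]
  push_cast; ring

theorem eulerOp_eq_zero_of_weight_ne_zero {v : ℤ × ℤ → ℂ} (hv : ∀ q, weight p q ≠ 0 → v q = 0) :
    eulerOp p Γ v = 0 := by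
  have hwv : ∀ q, (weight p q : ℂ) * v q = 0 := fun q => by
    by_cases h : weight p q = 0
    · simp [h]
    · simp [hv q h]
  ext k
  simp [eulerOp_apply, hwv]

theorem apply_eq_zero_of_cross_eq_zero {lam : ℂ} (hlam : lam ≠ 0) {ω : ℤ × ℤ → ℂ}
    (hω : eulerOp p Γ ω = lam • ω) {k : ℤ × ℤ} (hk : cross p k = 0) : ω k = 0 := by
  have := congrFun hω k
  rw [eulerOp_apply, hk, Pi.smul_apply, smul_eq_mul] at this
  simpa [hlam] using this.symm

theorem _root_.IsEigenvalueL.exists_hasEigenvector {lam : ℂ} (h : IsEigenvalueL p Γ lam) :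
    ∃ ω, Memℓp ω 2 ∧ (eulerOp p Γ).HasEigenvector lam ω := by
  obtain ⟨ω, hω₂, hω₀, hω0, heq⟩ := h
  refine ⟨ω, hω₂, Module.End.mem_eigenspace_iff.mpr ?_, hω₀⟩
  ext k
  rcases eq_or_ne k 0 with rfl | hk
  · simp [eulerOp_apply, cross, hω0]
  · exact (heq k hk).symm

variable (p) in
noncomputable def lineForm (b : ℤ × ℤ) (v w : ℤ × ℤ → ℂ) : ℂ :=
  ∑' n : ℤ, weight p (b + n • p) * v (b + n • p) * conj (w (b + n • p))

theorem summable_sq_comp_line (hp : p ≠ 0) {ω : ℤ × ℤ → ℂ} (hω : Memℓp ω 2) (b : ℤ × ℤ) :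
    Summable fun n : ℤ => ‖ω (b + n • p)‖ ^ 2 :=
  hω.summable_norm_sq.comp_injective fun _ _ h => smul_left_injective ℤ hp (add_left_cancel h)

theorem summable_lineForm (hp : p ≠ 0) {v w : ℤ × ℤ → ℂ} (hv : Memℓp v 2) (hw : Memℓp w 2)
    (b : ℤ × ℤ) :
    Summable fun n : ℤ => (weight p (b + n • p) : ℂ) * v (b + n • p) * conj (w (b + n • p)) :=
  summable_mul_conj_of_summable_sq
    (summable_sq_ofReal_mul (fun _ => abs_weight_le_one _ _) (summable_sq_comp_line hp hv b))
    (summable_sq_comp_line hp hw b)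

theorem lineForm_sum_sum (hp : p ≠ 0) {ι : Type*} {W : ι → ℤ × ℤ → ℂ} (hW : ∀ i, Memℓp (W i) 2)
    (s : Finset ι) (c : ι → ℂ) (b : ℤ × ℤ) :
    lineForm p b (∑ i ∈ s, c i • W i) (∑ i ∈ s, c i • W i) =
      ∑ i ∈ s, ∑ j ∈ s, c i * conj (c j) * lineForm p b (W i) (W j) := by
  simp only [lineForm, Finset.sum_apply, Pi.smul_apply, smul_eq_mul, map_sum, map_mul,
    Finset.mul_sum, Finset.sum_mul]
  have hsum : ∀ i j, Summable fun n : ℤ => (weight p (b + n • p) : ℂ) * (c i * W i (b + n • p)) *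
      (conj (c j) * conj (W j (b + n • p))) := fun i j =>
    ((summable_lineForm hp (hW i) (hW j) b).mul_left (c i * conj (c j))).congr fun n => by ring
  rw [tsum_congr fun n => Finset.sum_comm,
    Summable.tsum_finsetSum fun i _ => summable_sum fun j _ => hsum i j]
  refine Finset.sum_congr rfl fun i _ => ?_
  rw [Summable.tsum_finsetSum fun j _ => hsum i j]
  refine Finset.sum_congr rfl fun j _ => ?_
  rw [← tsum_mul_left]
  congr 1 with n
  ring

theorem add_conj_mul_lineForm_eq_zero (hp : p ≠ 0) {lam lam' : ℂ} {v w : ℤ × ℤ → ℂ}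
    (hv : Memℓp v 2) (hw : Memℓp w 2) (hev : eulerOp p Γ v = lam • v)
    (hew : eulerOp p Γ w = lam' • w) (b : ℤ × ℤ) :
    (lam + conj lam') * lineForm p b v w = 0 := by
  have hline : ∀ {u : ℤ × ℤ → ℂ} {μ : ℂ}, eulerOp p Γ u = μ • u → ∀ n : ℤ,
      μ * u (b + n • p) = cross p b / 2 * (Γ * (weight p (b + (n - 1) • p) * u (b + (n - 1) • p))
        - conj Γ * (weight p (b + (n + 1) • p) * u (b + (n + 1) • p))) := fun hu n => by
    have hprev : b + n • p - p = b + (n - 1) • p := by rw [sub_smul, one_smul]; abel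
    have hnext : b + n • p + p = b + (n + 1) • p := by rw [add_smul, one_smul]; abel
    have h := congrFun hu (b + n • p)
    rw [eulerOp_apply, cross_add_smul, hprev, hnext, Pi.smul_apply, smul_eq_mul] at h
    exact h.symm
  exact add_conj_mul_tsum_eq_zero_of_tridiagonal (fun n => abs_weight_le_one p (b + n • p))
    (summable_sq_comp_line hp hv b) (summable_sq_comp_line hp hw b) (hline hev) (hline hew)

theorem apply_eq_zero_of_lineForm_self_eq_zero (hp : p ≠ 0) {v : ℤ × ℤ → ℂ} (hv : Memℓp v 2)
    (hpos : ∀ q, 0 < weight p q → v q = 0) {k : ℤ × ℤ} (hk : lineForm p k v v = 0)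
    (hwk : weight p k ≠ 0) : v k = 0 := by
  set t : ℤ → ℝ := fun n => weight p (k + n • p) * ‖v (k + n • p)‖ ^ 2
  have hterm : ∀ n : ℤ, (weight p (k + n • p) : ℂ) * v (k + n • p) * conj (v (k + n • p)) = t n :=
    fun n => by simp [t, mul_assoc, Complex.mul_conj']
  have ht : Summable t := Complex.summable_ofReal.mp ((summable_lineForm hp hv hv k).congr hterm)
  have ht0 : ∑' n, t n = 0 := by
    rw [lineForm, tsum_congr hterm, ← Complex.ofReal_tsum] at hk
    exact_mod_cast hk
  have ht_nonpos : ∀ n, t n ≤ 0 := fun n => by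
    rcases le_or_gt (weight p (k + n • p)) 0 with h | h
    · exact mul_nonpos_of_nonpos_of_nonneg h (by positivity)
    · simp only [t]
      rw [hpos _ h, norm_zero]
      simp
  have hneg : HasSum (fun n => -t n) 0 := by
    have h := ht.neg.hasSum
    rwa [tsum_neg, ht0, neg_zero] at h
  have := congrFun ((hasSum_zero_iff_of_nonneg fun n => neg_nonneg.mpr (ht_nonpos n)).mp hneg) 0
  simpa [t, hwk] using this

def nonparallelDiskPoints (p : ℤ × ℤ) : Set (ℤ × ℤ) :=
  {q | q ≠ 0 ∧ nsq q < nsq p ∧ p.1 * q.2 - p.2 * q.1 ≠ 0}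

theorem finite_nonparallelDiskPoints (p : ℤ × ℤ) : (nonparallelDiskPoints p).Finite := by
  set M := p.1 ^ 2 + p.2 ^ 2
  refine (Set.finite_Icc (-M, -M) (M, M)).subset fun q ⟨_, hlt, _⟩ => ?_
  have h : q.1 ^ 2 + q.2 ^ 2 < M := by unfold nsq at hlt; exact_mod_cast hlt
  have := Int.le_self_sq q.1; have := Int.le_self_sq q.2
  have := Int.le_self_sq (-q.1); have := Int.le_self_sq (-q.2)
  simp only [Set.mem_Icc]
  refine ⟨⟨?_, ?_⟩, ?_, ?_⟩ <;> nlinarith [sq_nonneg q.1, sq_nonneg q.2]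

theorem eulerOp_eq_zero_of_mem_span_eigenvectors (hp : p ≠ 0) {ι : Type*} {μ : ι → ℂ}
    (hμ : ∀ i j, μ i + conj (μ j) ≠ 0) {W : ι → ℤ × ℤ → ℂ} (hW₂ : ∀ i, Memℓp (W i) 2)
    (hW : ∀ i, eulerOp p Γ (W i) = μ i • W i) {v : ℤ × ℤ → ℂ}
    (hv : v ∈ Submodule.span ℂ (Set.range W)) (hvS : ∀ q ∈ nonparallelDiskPoints p, v q = 0) :
    eulerOp p Γ v = 0 := by
  obtain ⟨c, rfl⟩ := Finsupp.mem_span_range_iff_exists_finsupp.mp hv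
  rw [Finsupp.sum] at hvS ⊢
  have hμ₀ : ∀ i, μ i ≠ 0 := fun i h => hμ i i (by simp [h])
  have hv₂ : Memℓp (∑ i ∈ c.support, c i • W i) 2 := by
    simpa [Finset.sum_fn] using Memℓp.finsetSum c.support fun i _ => (hW₂ i).const_smul (c i)
  have hcross : ∀ q, cross p q = 0 → (∑ i ∈ c.support, c i • W i) q = 0 := fun q hq => by
    simp [Finset.sum_apply, apply_eq_zero_of_cross_eq_zero (hμ₀ _) (hW _) hq]
  have hpos : ∀ q, 0 < weight p q → (∑ i ∈ c.support, c i • W i) q = 0 := fun q hq => by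
    obtain ⟨hq0, hlt⟩ := ne_zero_and_nsq_lt_of_weight_pos hp hq
    by_cases hpar : p.1 * q.2 - p.2 * q.1 = 0
    · exact hcross q (by simp [cross, hpar])
    · exact hvS q ⟨hq0, hlt, hpar⟩
  have hform : ∀ k, lineForm p k (∑ i ∈ c.support, c i • W i) (∑ i ∈ c.support, c i • W i) = 0 :=
    fun k => by
      rw [lineForm_sum_sum hp hW₂]
      refine Finset.sum_eq_zero fun i _ => Finset.sum_eq_zero fun j _ => ?_
      rw [(mul_eq_zero.mp (add_conj_mul_lineForm_eq_zero hp (hW₂ i) (hW₂ j) (hW i) (hW j) k))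
        |>.resolve_left (hμ i j), mul_zero]
  exact eulerOp_eq_zero_of_weight_ne_zero fun q hq =>
    apply_eq_zero_of_lineForm_self_eq_zero hp hv₂ hpos (hform q) hq

theorem finite_and_ncard_le_of_add_conj_ne_zero (hp : p ≠ 0) {E : Set ℂ}
    (hE : ∀ lam ∈ E, IsEigenvalueL p Γ lam) (hsign : ∀ lam ∈ E, ∀ μ ∈ E, lam + conj μ ≠ 0) :
    E.Finite ∧ E.ncard ≤ (nonparallelDiskPoints p).ncard := by
  choose W hW₂ hW using fun lam : E => (hE lam lam.2).exists_hasEigenvector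
  have hli : LinearIndependent ℂ
      (LinearMap.funLeft ℂ ℂ ((↑) : nonparallelDiskPoints p → ℤ × ℤ) ∘ W) :=
    linearIndependent_comp_of_hasEigenvector _ _ Subtype.val_injective
      (fun lam h => hsign lam lam.2 lam lam.2 (by simp [h])) hW
      fun v hv hvS => eulerOp_eq_zero_of_mem_span_eigenvectors hp
        (fun i j => hsign _ i.2 _ j.2) hW₂ (fun i => (hW i).apply_eq_smul) hv
        fun q hq => congrFun hvS ⟨q, hq⟩
  have := (finite_nonparallelDiskPoints p).to_subtype
  have := hli.finite
  have := Fintype.ofFinite E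
  have := Fintype.ofFinite (nonparallelDiskPoints p)
  refine ⟨Set.toFinite E, ?_⟩
  rw [← Nat.card_coe_set_eq, ← Nat.card_coe_set_eq, Nat.card_eq_fintype_card,
    Nat.card_eq_fintype_card]
  exact hli.fintype_card_le_finrank.trans_eq (Module.finrank_fintype_fun_eq_card ℂ)

end LinearizedEuler

open LinearizedEuler

/-- The number of nonimaginary eigenvalues of the linearized 2D Euler operator L
(at the one-mode fixed point with mode p) does not exceed 2ζ, where ζ is the number
of lattice points in the open disk of radius |p| not parallel to p. -/
theorem nonimaginary_eigenvalues_bound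
    (p : ℤ × ℤ) (hp : p ≠ 0) (Γ : ℂ) :
    let ζ : ℕ := Set.ncard {q : ℤ × ℤ | q ≠ 0 ∧ nsq q < nsq p ∧
      p.1 * q.2 - p.2 * q.1 ≠ 0}
    {lam : ℂ | lam.re ≠ 0 ∧ IsEigenvalueL p Γ lam}.Finite
      ∧ Set.ncard {lam : ℂ | lam.re ≠ 0 ∧ IsEigenvalueL p Γ lam} ≤ 2 * ζ := by
  intro ζ
  have hsplit : {lam : ℂ | lam.re ≠ 0 ∧ IsEigenvalueL p Γ lam} =
      {lam | 0 < lam.re ∧ IsEigenvalueL p Γ lam} ∪ {lam | lam.re < 0 ∧ IsEigenvalueL p Γ lam} := by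
    ext lam
    simp only [Set.mem_union, Set.mem_ofPred_eq, ← or_and_right, or_comm (a := 0 < lam.re),
      lt_or_lt_iff_ne]
  have hsame : ∀ lam μ : ℂ, 0 < lam.re * μ.re → lam + conj μ ≠ 0 := fun lam μ h hsum => by
    have := congrArg Complex.re hsum
    simp only [Complex.add_re, Complex.conj_re, Complex.zero_re] at this
    rw [show μ.re = -lam.re by linarith] at h
    nlinarith [sq_nonneg lam.re]
  obtain ⟨hfinPos, hcardPos⟩ := finite_and_ncard_le_of_add_conj_ne_zero hp
    (E := {lam | 0 < lam.re ∧ IsEigenvalueL p Γ lam}) (fun _ h => h.2)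
    fun lam hlam μ hμ => hsame lam μ (mul_pos hlam.1 hμ.1)
  obtain ⟨hfinNeg, hcardNeg⟩ := finite_and_ncard_le_of_add_conj_ne_zero hp
    (E := {lam | lam.re < 0 ∧ IsEigenvalueL p Γ lam}) (fun _ h => h.2)
    fun lam hlam μ hμ => hsame lam μ (mul_pos_of_neg_of_neg hlam.1 hμ.1)
  rw [hsplit]
  exact ⟨hfinPos.union hfinNeg, (Set.ncard_union_le _ _).trans
    (by change _ ≤ 2 * (nonparallelDiskPoints p).ncard; omega)⟩
end
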